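/- Let ρ ≥ |μ| and let z₂ : {x : Im x ≤ 0, |x| ≥ ρ} → ℂ² be continuous and bounded, satisfying for every x = R·e^{iθ} in its domain the equation z₂(R e^{iθ}) = A(R e^{iθ})·( z₂⁰ − ½ ∫_R^∞ g²(R e^{iθ}, r e^{iθ})·(J + μB)·(μ e^{−iθ}/r²)·z₂(r e^{iθ}) dr ) with absolutely convergent integral. Define w(x) = −K·z₂(−x) for Im x ≥ 0, |x| ≥ ρ. Then w satisfies the corresponding j = 1 equation: for every x = R·e^{iθ} with θ ∈ [0,π] and R ≥ ρ, w(R e^{iθ}) = A(R e^{iθ})·( z₁⁰ − ½ ∫_R^∞ g¹(R e^{iθ}, r e^{iθ})·(J + μB)·(μ e^{−iθ}/r²)·w(r e^{iθ}) dr ). -/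

import Mathlib

open Complex Matrix Set MeasureTheory

noncomputable def Bmat : Matrix (Fin 2) (Fin 2) ℂ := !![0, 1; -1, 0]
noncomputable def Jmat : Matrix (Fin 2) (Fin 2) ℂ := !![0, 1; 1, 0]
noncomputable def Kmat : Matrix (Fin 2) (Fin 2) ℂ := !![1, 0; 0, -1]

noncomputable def Amat (μ : ℂ) (x : ℂ) : Matrix (Fin 2) (Fin 2) ℂ :=
  (1 - μ ^ 2 / (4 * x ^ 2))⁻¹ • (1 + (μ / (2 * x)) • Jmat)

/-- `z₁⁰ = (i,1)ᵀ` (index 0), `z₂⁰ = (-i,1)ᵀ` (index 1). -/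
noncomputable def z0vec : Fin 2 → Fin 2 → ℂ :=
  ![![Complex.I, 1], ![-Complex.I, 1]]

/-- The kernels `g¹` (index 0) and `g²` (index 1). -/
noncomputable def gker (j : Fin 2) (x t : ℂ) : Matrix (Fin 2) (Fin 2) ℂ :=
  if j = 0 then
    (1 / (2 * Complex.I)) • ((Complex.I • (1 : Matrix (Fin 2) (Fin 2) ℂ) - Bmat) +
      Complex.exp (2 * Complex.I * (t - x)) • (Complex.I • (1 : Matrix (Fin 2) (Fin 2) ℂ) + Bmat))
  else
    (1 / (2 * Complex.I)) • (Complex.exp (-(2 * Complex.I * (t - x))) •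
      (Complex.I • (1 : Matrix (Fin 2) (Fin 2) ℂ) - Bmat) +
      (Complex.I • (1 : Matrix (Fin 2) (Fin 2) ℂ) + Bmat))

/-!
Conjugation by `K` intertwines the `j = 2` data with the `j = 1` data:
`K g²(-x, -t) = g¹(x, t) K`, `K A(-x) = A(x) K`, `K` anticommutes with `J + μB`, and
`-K z₂⁰ = z₁⁰`.
The ray `r e^{i(θ - π)}` in the lower half-plane is the negative of the ray `r e^{iθ}` in the upper
one, and `e^{-i(θ - π)} = -e^{-iθ}`; this sign cancels the one from the anticommutation. Hence
the `j = 1` integrand for `w` along `θ` is `-K` applied to the `j = 2` integrand for `z₂` along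
`θ - π`, and `-K` passes through the integral.
-/

section IntegralMulVec

variable {α 𝕜 m n : Type*} [MeasurableSpace α] {ν : Measure α} [RCLike 𝕜] [Fintype m]
  [Fintype n]

theorem Matrix.integrable_mulVec (M : Matrix m n 𝕜) {f : α → n → 𝕜} (hf : Integrable f ν) :
    Integrable (fun a => M *ᵥ f a) ν :=
  (LinearMap.toContinuousLinearMap M.mulVecLin).integrable_comp hf

theorem Matrix.integral_mulVec (M : Matrix m n 𝕜) {f : α → n → 𝕜} (hf : Integrable f ν) :
    ∫ a, M *ᵥ f a ∂ν = M *ᵥ ∫ a, f a ∂ν :=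
  (LinearMap.toContinuousLinearMap M.mulVecLin).integral_comp_comm hf

end IntegralMulVec

theorem norm_ofReal_mul_exp_mul_I (s θ : ℝ) : ‖(s : ℂ) * exp (θ * I)‖ = |s| := by
  rw [norm_mul, norm_exp_ofReal_mul_I, mul_one, norm_real, Real.norm_eq_abs]

theorem im_ofReal_mul_exp_mul_I_nonneg {s θ : ℝ} (hs : 0 ≤ s) (hθ₀ : 0 ≤ θ)
    (hθπ : θ ≤ Real.pi) :
    0 ≤ ((s : ℂ) * exp (θ * I)).im := by
  simpa [mul_im, exp_ofReal_mul_I_re, exp_ofReal_mul_I_im] using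
    mul_nonneg hs (Real.sin_nonneg_of_nonneg_of_le_pi hθ₀ hθπ)

theorem ofReal_mul_exp_sub_pi_mul_I (s θ : ℝ) :
    (s : ℂ) * exp (↑(θ - Real.pi) * I) = -((s : ℂ) * exp (θ * I)) := by
  push_cast
  rw [sub_mul, exp_sub, exp_pi_mul_I]
  ring

theorem exp_neg_sub_pi_mul_I (θ : ℝ) : exp (-↑(θ - Real.pi) * I) = -exp (-θ * I) := by
  push_cast
  rw [show -((θ : ℂ) - Real.pi) * I = -θ * I + Real.pi * I by ring, exp_add, exp_pi_mul_I]
  ring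

theorem Kmat_mul_gker_one_neg (x t : ℂ) : Kmat * gker 1 (-x) (-t) = gker 0 x t * Kmat := by
  simp only [gker, one_ne_zero, if_true, if_false,
    show -(2 * I * (-t - -x)) = 2 * I * (t - x) by ring]
  ext i j
  fin_cases i <;> fin_cases j <;> simp [Kmat, Bmat, mul_apply, Fin.sum_univ_two] <;> ring

theorem Kmat_mul_Jmat_add_smul_Bmat (μ : ℂ) :
    Kmat * (Jmat + μ • Bmat) = -((Jmat + μ • Bmat) * Kmat) := by
  ext i j
  fin_cases i <;> fin_cases j <;> simp [Kmat, Bmat, Jmat, mul_apply, Fin.sum_univ_two]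

theorem Kmat_mul_Amat_neg (μ x : ℂ) : Kmat * Amat μ (-x) = Amat μ x * Kmat := by
  rw [Amat, Amat, neg_sq, mul_neg, div_neg]
  ext i j
  fin_cases i <;> fin_cases j <;> simp [Kmat, Jmat, mul_apply, Fin.sum_univ_two]

theorem neg_Kmat_mulVec_z0vec_one : -(Kmat *ᵥ z0vec 1) = z0vec 0 := by
  ext i
  fin_cases i <;> simp [Kmat, z0vec]

theorem neg_Kmat_mulVec_Amat_neg (μ x c : ℂ) (v : Fin 2 → ℂ) :
    -(Kmat *ᵥ (Amat μ (-x) *ᵥ (z0vec 1 - c • v))) =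
      Amat μ x *ᵥ (z0vec 0 - c • -(Kmat *ᵥ v)) := by
  rw [mulVec_mulVec, Kmat_mul_Amat_neg, ← mulVec_mulVec, ← mulVec_neg, mulVec_sub, mulVec_smul,
    ← neg_Kmat_mulVec_z0vec_one, smul_neg]
  abel_nf

noncomputable def rayIntegrand (μ : ℂ) (j : Fin 2) (z : ℂ → Fin 2 → ℂ) (R θ r : ℝ) : Fin 2 → ℂ :=
  (μ * exp (-(θ : ℂ) * I) / (r : ℂ) ^ 2) •
    ((gker j ((R : ℂ) * exp (θ * I)) ((r : ℂ) * exp (θ * I)) * (Jmat + μ • Bmat)) *ᵥ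
      z ((r : ℂ) * exp (θ * I)))

theorem rayIntegrand_zero_eq_neg_Kmat_mulVec {μ : ℂ} {z w : ℂ → Fin 2 → ℂ} {R θ r : ℝ}
    (hw : w ((r : ℂ) * exp (θ * I)) = -(Kmat *ᵥ z (-((r : ℂ) * exp (θ * I))))) :
    rayIntegrand μ 0 w R θ r = -(Kmat *ᵥ rayIntegrand μ 1 z R (θ - Real.pi) r) := by
  have hM : Kmat * (gker 1 (-((R : ℂ) * exp (θ * I))) (-((r : ℂ) * exp (θ * I))) *
      (Jmat + μ • Bmat)) =
      -(gker 0 ((R : ℂ) * exp (θ * I)) ((r : ℂ) * exp (θ * I)) * (Jmat + μ • Bmat) * Kmat) := by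
    rw [← Matrix.mul_assoc, Kmat_mul_gker_one_neg, Matrix.mul_assoc, Kmat_mul_Jmat_add_smul_Bmat,
      Matrix.mul_neg, ← Matrix.mul_assoc]
  simp only [rayIntegrand, ofReal_mul_exp_sub_pi_mul_I, exp_neg_sub_pi_mul_I, hw]
  rw [mulVec_smul, mulVec_mulVec, hM, neg_mulVec, mulVec_neg, mulVec_mulVec]
  module

theorem stmt6_general (μ : ℂ) (ρ : ℝ) (hρ : ‖μ‖ ≤ ρ)
    (z₂ : ℂ → Fin 2 → ℂ)
    (heq : ∀ R θ : ℝ, ρ ≤ R → ((R : ℂ) * Complex.exp (θ * Complex.I)).im ≤ 0 →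
      (IntegrableOn (fun r : ℝ =>
          (μ * Complex.exp (-(θ : ℂ) * Complex.I) / (r : ℂ) ^ 2) •
            ((gker 1 ((R : ℂ) * Complex.exp (θ * Complex.I))
                ((r : ℂ) * Complex.exp (θ * Complex.I)) *
              (Jmat + μ • Bmat)).mulVec (z₂ ((r : ℂ) * Complex.exp (θ * Complex.I)))))
        (Set.Ioi R)) ∧
      z₂ ((R : ℂ) * Complex.exp (θ * Complex.I)) =
        (Amat μ ((R : ℂ) * Complex.exp (θ * Complex.I))).mulVec
          (z0vec 1 - (1 / 2 : ℂ) • ∫ r in Set.Ioi R,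
            (μ * Complex.exp (-(θ : ℂ) * Complex.I) / (r : ℂ) ^ 2) •
              ((gker 1 ((R : ℂ) * Complex.exp (θ * Complex.I))
                  ((r : ℂ) * Complex.exp (θ * Complex.I)) *
                (Jmat + μ • Bmat)).mulVec
                (z₂ ((r : ℂ) * Complex.exp (θ * Complex.I))))))
    (w : ℂ → Fin 2 → ℂ)
    (hw : ∀ x : ℂ, 0 ≤ x.im → ρ ≤ ‖x‖ → w x = -(Kmat.mulVec (z₂ (-x)))) :
    ∀ R θ : ℝ, ρ ≤ R → 0 ≤ θ → θ ≤ Real.pi →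
      (IntegrableOn (fun r : ℝ =>
          (μ * Complex.exp (-(θ : ℂ) * Complex.I) / (r : ℂ) ^ 2) •
            ((gker 0 ((R : ℂ) * Complex.exp (θ * Complex.I))
                ((r : ℂ) * Complex.exp (θ * Complex.I)) *
              (Jmat + μ • Bmat)).mulVec (w ((r : ℂ) * Complex.exp (θ * Complex.I)))))
        (Set.Ioi R)) ∧
      w ((R : ℂ) * Complex.exp (θ * Complex.I)) =
        (Amat μ ((R : ℂ) * Complex.exp (θ * Complex.I))).mulVec
          (z0vec 0 - (1 / 2 : ℂ) • ∫ r in Set.Ioi R,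
            (μ * Complex.exp (-(θ : ℂ) * Complex.I) / (r : ℂ) ^ 2) •
              ((gker 0 ((R : ℂ) * Complex.exp (θ * Complex.I))
                  ((r : ℂ) * Complex.exp (θ * Complex.I)) *
                (Jmat + μ • Bmat)).mulVec
                (w ((r : ℂ) * Complex.exp (θ * Complex.I))))) := by
  intro R θ hR hθ₀ hθπ
  have hR₀ : 0 ≤ R := (norm_nonneg μ).trans (hρ.trans hR)
  have hw_ray : ∀ r : ℝ, R ≤ r →
      w (r * exp (θ * I)) = -(Kmat *ᵥ z₂ (-(r * exp (θ * I)))) := by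
    intro r hr
    have hr₀ : 0 ≤ r := hR₀.trans hr
    refine hw _ (im_ofReal_mul_exp_mul_I_nonneg hr₀ hθ₀ hθπ) ?_
    rw [norm_ofReal_mul_exp_mul_I, abs_of_nonneg hr₀]
    exact hR.trans hr
  have hrefl : EqOn (rayIntegrand μ 0 w R θ)
      (fun r => -(Kmat *ᵥ rayIntegrand μ 1 z₂ R (θ - Real.pi) r)) (Ioi R) :=
    fun r hr => rayIntegrand_zero_eq_neg_Kmat_mulVec (hw_ray r hr.le)
  obtain ⟨hint, hz⟩ := heq R (θ - Real.pi) hR (by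
    rw [ofReal_mul_exp_sub_pi_mul_I, neg_im, neg_nonpos]
    exact im_ofReal_mul_exp_mul_I_nonneg hR₀ hθ₀ hθπ)
  change IntegrableOn (rayIntegrand μ 1 z₂ R (θ - Real.pi)) (Ioi R) at hint
  change _ = _ *ᵥ (_ - _ • ∫ r in Ioi R, rayIntegrand μ 1 z₂ R (θ - Real.pi) r) at hz
  rw [ofReal_mul_exp_sub_pi_mul_I] at hz
  change IntegrableOn (rayIntegrand μ 0 w R θ) (Ioi R) ∧
    _ = _ *ᵥ (_ - _ • ∫ r in Ioi R, rayIntegrand μ 0 w R θ r)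
  refine ⟨IntegrableOn.congr_fun (Kmat.integrable_mulVec hint).neg hrefl.symm measurableSet_Ioi, ?_⟩
  rw [setIntegral_congr_fun measurableSet_Ioi hrefl, integral_neg, Kmat.integral_mulVec hint,
    hw_ray R le_rfl, hz, neg_Kmat_mulVec_Amat_neg]

theorem stmt6 (μ : ℂ) (hμ : 0 < μ.re) (ρ : ℝ) (hρ : ‖μ‖ ≤ ρ)
    (z₂ : ℂ → Fin 2 → ℂ)
    (hcont : ContinuousOn z₂ {x : ℂ | x.im ≤ 0 ∧ ρ ≤ ‖x‖})
    (hbdd : ∃ M : ℝ, ∀ x ∈ {x : ℂ | x.im ≤ 0 ∧ ρ ≤ ‖x‖}, ‖z₂ x‖ ≤ M)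
    (heq : ∀ R θ : ℝ, ρ ≤ R → ((R : ℂ) * Complex.exp (θ * Complex.I)).im ≤ 0 →
      (IntegrableOn (fun r : ℝ =>
          (μ * Complex.exp (-(θ : ℂ) * Complex.I) / (r : ℂ) ^ 2) •
            ((gker 1 ((R : ℂ) * Complex.exp (θ * Complex.I))
                ((r : ℂ) * Complex.exp (θ * Complex.I)) *
              (Jmat + μ • Bmat)).mulVec (z₂ ((r : ℂ) * Complex.exp (θ * Complex.I)))))
        (Set.Ioi R)) ∧
      z₂ ((R : ℂ) * Complex.exp (θ * Complex.I)) =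
        (Amat μ ((R : ℂ) * Complex.exp (θ * Complex.I))).mulVec
          (z0vec 1 - (1 / 2 : ℂ) • ∫ r in Set.Ioi R,
            (μ * Complex.exp (-(θ : ℂ) * Complex.I) / (r : ℂ) ^ 2) •
              ((gker 1 ((R : ℂ) * Complex.exp (θ * Complex.I))
                  ((r : ℂ) * Complex.exp (θ * Complex.I)) *
                (Jmat + μ • Bmat)).mulVec
                (z₂ ((r : ℂ) * Complex.exp (θ * Complex.I))))))
    (w : ℂ → Fin 2 → ℂ)
    (hw : ∀ x : ℂ, 0 ≤ x.im → ρ ≤ ‖x‖ → w x = -(Kmat.mulVec (z₂ (-x)))) :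
    ∀ R θ : ℝ, ρ ≤ R → 0 ≤ θ → θ ≤ Real.pi →
      (IntegrableOn (fun r : ℝ =>
          (μ * Complex.exp (-(θ : ℂ) * Complex.I) / (r : ℂ) ^ 2) •
            ((gker 0 ((R : ℂ) * Complex.exp (θ * Complex.I))
                ((r : ℂ) * Complex.exp (θ * Complex.I)) *
              (Jmat + μ • Bmat)).mulVec (w ((r : ℂ) * Complex.exp (θ * Complex.I)))))
        (Set.Ioi R)) ∧
      w ((R : ℂ) * Complex.exp (θ * Complex.I)) =
        (Amat μ ((R : ℂ) * Complex.exp (θ * Complex.I))).mulVec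
          (z0vec 0 - (1 / 2 : ℂ) • ∫ r in Set.Ioi R,
            (μ * Complex.exp (-(θ : ℂ) * Complex.I) / (r : ℂ) ^ 2) •
              ((gker 0 ((R : ℂ) * Complex.exp (θ * Complex.I))
                  ((r : ℂ) * Complex.exp (θ * Complex.I)) *
                (Jmat + μ • Bmat)).mulVec
                (w ((r : ℂ) * Complex.exp (θ * Complex.I))))) :=
  stmt6_general μ ρ hρ z₂ heq w hw
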